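/- arXiv:2411.09485 — 2 statements merged into one kernel-verified Lean document; each statement's English description precedes it below -/
import Mathlib

section
/- Let α, β ∈ ℕ³ with β₀ = 0, β₁ ≥ 1, β₂ ≥ 1, α₀ ≥ 1 and ‖α+β‖_∞ ≤ |α| + 1. Then the six functions R^α_β, R^α_{β−e₁}, R^α_{β−e₂}, R^{α−e₀+e₁}_{β−e₁}, R^{α−e₀+e₂}_{β−e₂}, R^{α−e₀+e₁+e₂}_β are all Lebesgue integrable on T, and ∫_T R^α_β = (1/2) · (∫_T R^α_{β−e₁} + ∫_T R^α_{β−e₂} + ∫_T R^{α−e₀+e₁}_{β−e₁} + ∫_T R^{α−e₀+e₂}_{β−e₂}) − ∫_T R^{α−e₀+e₁+e₂}_β, where all integrals are Lebesgue integrals over T. -/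
/-!
Write `A = 1 - x = λ₀ + y` and `B = 1 - y = λ₀ + x`. Then `λ₀ + xy = AB`, so
`2 (λ₀ + xy) = (λ₀ + x) A + (λ₀ + y) B`, and multiplying by
`λ₀^(α₀-1) x^α₁ y^α₂ / (A^β₁ B^β₂)` gives the recursion pointwise off the lines `x = 1`, `y = 1`.

For integrability, `λ₀ ≤ AB`, `x ≤ B`, `y ≤ A` together with `‖α+β‖_∞ ≤ |α| + 1` bound every
`R^α_β` with `β₀ = 0` by `1/(AB) ≤ 1/A + 1/B` on `T` (as `A + B ≥ 1`), and `1/A` is integrable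
over `T` because the fibre of `T` over `x` has length exactly `A`.
-/

open MeasureTheory

/-- The rational function `R^α_β` on the standard triangle, in the coordinates
`λ₀ = 1-x-y`, `λ₁ = x`, `λ₂ = y` (so `1-λ₀ = x+y`, `1-λ₁ = 1-x`, `1-λ₂ = 1-y`). -/
noncomputable def ratR (α₀ α₁ α₂ β₀ β₁ β₂ : ℕ) (q : ℝ × ℝ) : ℝ :=
  (1 - q.1 - q.2) ^ α₀ * q.1 ^ α₁ * q.2 ^ α₂ /
    ((q.1 + q.2) ^ β₀ * (1 - q.1) ^ β₁ * (1 - q.2) ^ β₂)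

/-- The standard triangle `T ⊂ ℝ²`. -/
def stdTri : Set (ℝ × ℝ) := {q | 0 ≤ q.1 ∧ 0 ≤ q.2 ∧ q.1 + q.2 ≤ 1}

open Set ENNReal

lemma measurableSet_stdTri : MeasurableSet stdTri :=
  (measurableSet_le measurable_const measurable_fst).inter
    ((measurableSet_le measurable_const measurable_snd).inter
      (measurableSet_le (measurable_fst.add measurable_snd) measurable_const))

lemma lintegral_stdTri_comp_fst {f : ℝ → ℝ≥0∞} (hf : Measurable f) :
    ∫⁻ q in stdTri, f q.1 = ∫⁻ x in Icc 0 1, f x * ENNReal.ofReal (1 - x) := by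
  rw [← lintegral_indicator measurableSet_stdTri, Measure.volume_eq_prod,
    lintegral_prod _
      ((Measurable.indicator (f := fun q : ℝ × ℝ => f q.1) (by fun_prop)
        measurableSet_stdTri).aemeasurable),
    ← lintegral_indicator measurableSet_Icc]
  refine lintegral_congr fun x => ?_
  by_cases hx : x ∈ Icc (0 : ℝ) 1
  · have fibre : ∀ y, (x, y) ∈ stdTri ↔ y ∈ Icc 0 (1 - x) := fun y =>
      ⟨fun ⟨_, hy, hxy⟩ => ⟨hy, by linarith⟩, fun ⟨hy, hxy⟩ => ⟨hx.1, hy, by linarith⟩⟩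
    calc ∫⁻ y, stdTri.indicator (fun q => f q.1) (x, y)
        = ∫⁻ y, (Icc 0 (1 - x)).indicator (fun _ => f x) y := by
          congr 1 with y
          by_cases hy : y ∈ Icc 0 (1 - x)
          · rw [indicator_of_mem hy, indicator_of_mem ((fibre y).2 hy)]
          · rw [indicator_of_notMem hy, indicator_of_notMem (mt (fibre y).1 hy)]
      _ = _ := by
          rw [lintegral_indicator_const measurableSet_Icc, Real.volume_Icc, sub_zero,
            indicator_of_mem hx]
  · have fibre : ∀ y, stdTri.indicator (fun q => f q.1) (x, y) = 0 := fun y =>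
      indicator_of_notMem (by rintro ⟨h0, hy, hxy⟩; exact hx ⟨h0, by linarith⟩) _
    simp only [fibre, indicator_of_notMem hx, lintegral_zero]

lemma integrableOn_stdTri_inv_one_sub_fst :
    IntegrableOn (fun q : ℝ × ℝ => (1 - q.1)⁻¹) stdTri := by
  refine ⟨by fun_prop, ?_⟩
  rw [HasFiniteIntegral, lintegral_stdTri_comp_fst (f := fun x => ‖(1 - x)⁻¹‖ₑ) (by fun_prop)]
  calc ∫⁻ x in Icc 0 1, ‖(1 - x)⁻¹‖ₑ * ENNReal.ofReal (1 - x)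
      ≤ ∫⁻ x in Icc (0 : ℝ) 1, 1 := by
        refine setLIntegral_mono measurable_const fun x hx => ?_
        rw [← Real.enorm_of_nonneg (sub_nonneg.mpr hx.2), ← enorm_mul]
        rcases eq_or_ne (1 - x) 0 with h | h <;> simp [h]
    _ < ⊤ := by simp

lemma integrableOn_stdTri_inv_one_sub_snd :
    IntegrableOn (fun q : ℝ × ℝ => (1 - q.2)⁻¹) stdTri := by
  have swap_stdTri : Prod.swap ⁻¹' stdTri = stdTri := by
    ext q
    simp only [stdTri, mem_preimage, mem_ofPred_eq, Prod.fst_swap, Prod.snd_swap]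
    constructor <;> rintro ⟨h₁, h₂, h₃⟩ <;> exact ⟨h₂, h₁, by linarith⟩
  refine (Measure.measurePreserving_swap.integrableOn_comp_preimage
    MeasurableEquiv.prodComm.measurableEmbedding).mp ?_
  rw [swap_stdTri]
  exact integrableOn_stdTri_inv_one_sub_fst

lemma ae_fst_ne_one_and_snd_ne_one : ∀ᵐ q : ℝ × ℝ, q.1 ≠ 1 ∧ q.2 ≠ 1 :=
  (Measure.quasiMeasurePreserving_fst.ae (Measure.ae_ne volume 1)).and
    (Measure.quasiMeasurePreserving_snd.ae (Measure.ae_ne volume 1))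

lemma ratR_nonneg (a₀ a₁ a₂ b₀ b₁ b₂ : ℕ) {q : ℝ × ℝ} (hq : q ∈ stdTri) :
    0 ≤ ratR a₀ a₁ a₂ b₀ b₁ b₂ q := by
  obtain ⟨hx, hy, hxy⟩ := hq
  have h₀ : 0 ≤ 1 - q.1 - q.2 := by linarith
  have h₁ : 0 ≤ 1 - q.1 := by linarith
  have h₂ : 0 ≤ 1 - q.2 := by linarith
  unfold ratR
  positivity

lemma measurable_ratR (a₀ a₁ a₂ b₀ b₁ b₂ : ℕ) : Measurable (ratR a₀ a₁ a₂ b₀ b₁ b₂) := by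
  unfold ratR
  fun_prop

lemma ratR_le_inv_add_inv {a₀ a₁ a₂ b₁ b₂ : ℕ} (h₁ : b₁ ≤ a₀ + a₂ + 1) (h₂ : b₂ ≤ a₀ + a₁ + 1)
    {q : ℝ × ℝ} (hq : q ∈ stdTri) (hx₁ : q.1 < 1) (hy₁ : q.2 < 1) :
    ratR a₀ a₁ a₂ 0 b₁ b₂ q ≤ (1 - q.1)⁻¹ + (1 - q.2)⁻¹ := by
  obtain ⟨hx, hy, hxy⟩ := hq
  set x := q.1
  set y := q.2
  have hA : 0 < 1 - x := by linarith
  have hB : 0 < 1 - y := by linarith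
  have numerator : (1 - x - y) ^ a₀ * x ^ a₁ * y ^ a₂ * ((1 - x) * (1 - y)) ≤
      (1 - x) ^ b₁ * (1 - y) ^ b₂ :=
    calc (1 - x - y) ^ a₀ * x ^ a₁ * y ^ a₂ * ((1 - x) * (1 - y))
        ≤ ((1 - x) * (1 - y)) ^ a₀ * (1 - y) ^ a₁ * (1 - x) ^ a₂ * ((1 - x) * (1 - y)) := by
          gcongr
          · linarith
          · nlinarith
          · linarith
          · linarith
      _ = (1 - x) ^ (a₀ + a₂ + 1) * (1 - y) ^ (a₀ + a₁ + 1) := by rw [mul_pow]; ring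
      _ ≤ (1 - x) ^ b₁ * (1 - y) ^ b₂ :=
          mul_le_mul (pow_le_pow_of_le_one hA.le (by linarith) h₁)
            (pow_le_pow_of_le_one hB.le (by linarith) h₂) (by positivity) (by positivity)
  calc ratR a₀ a₁ a₂ 0 b₁ b₂ q ≤ ((1 - x) * (1 - y))⁻¹ := by
        rw [ratR, pow_zero, one_mul, div_le_iff₀ (by positivity), inv_mul_eq_div,
          le_div_iff₀ (by positivity)]
        exact numerator
    _ ≤ ((1 - x) + (1 - y)) * ((1 - x) * (1 - y))⁻¹ :=
        le_mul_of_one_le_left (by positivity) (by linarith)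
    _ = (1 - x)⁻¹ + (1 - y)⁻¹ := by field_simp; ring

lemma integrableOn_ratR {a₀ a₁ a₂ b₁ b₂ : ℕ} (h₁ : b₁ ≤ a₀ + a₂ + 1) (h₂ : b₂ ≤ a₀ + a₁ + 1) :
    IntegrableOn (ratR a₀ a₁ a₂ 0 b₁ b₂) stdTri := by
  refine Integrable.mono'
    (integrableOn_stdTri_inv_one_sub_fst.add integrableOn_stdTri_inv_one_sub_snd)
    (measurable_ratR _ _ _ _ _ _).aestronglyMeasurable ?_
  rw [ae_restrict_iff' measurableSet_stdTri]
  filter_upwards [ae_fst_ne_one_and_snd_ne_one] with q ⟨hx₁, hy₁⟩ hq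
  rw [Real.norm_of_nonneg (ratR_nonneg _ _ _ _ _ _ hq)]
  exact ratR_le_inv_add_inv h₁ h₂ hq (lt_of_le_of_ne (by linarith [hq.2.1, hq.2.2]) hx₁)
    (lt_of_le_of_ne (by linarith [hq.1, hq.2.2]) hy₁)

lemma ratR_six_term_identity (e a₁ a₂ c d : ℕ) {q : ℝ × ℝ} (hx₁ : q.1 ≠ 1) (hy₁ : q.2 ≠ 1) :
    2 * ratR (e + 1) a₁ a₂ 0 (c + 1) (d + 1) q + 2 * ratR e (a₁ + 1) (a₂ + 1) 0 (c + 1) (d + 1) q =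
      ratR (e + 1) a₁ a₂ 0 c (d + 1) q + ratR (e + 1) a₁ a₂ 0 (c + 1) d q +
        ratR e (a₁ + 1) a₂ 0 c (d + 1) q + ratR e a₁ (a₂ + 1) 0 (c + 1) d q := by
  have hA : 1 - q.1 ≠ 0 := sub_ne_zero.mpr hx₁.symm
  have hB : 1 - q.2 ≠ 0 := sub_ne_zero.mpr hy₁.symm
  simp only [ratR, pow_zero, one_mul]
  field_simp
  ring

/-- For `β₀ = 0`, `β₁, β₂ ≥ 1`, `α₀ ≥ 1` and `‖α+β‖_∞ ≤ |α|+1`, the six functions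
`R^α_β`, `R^α_{β-e₁}`, `R^α_{β-e₂}`, `R^{α-e₀+e₁}_{β-e₁}`, `R^{α-e₀+e₂}_{β-e₂}`,
`R^{α-e₀+e₁+e₂}_β` are integrable on `T` and
`∫ R^α_β = ½(∫ R^α_{β-e₁} + ∫ R^α_{β-e₂} + ∫ R^{α-e₀+e₁}_{β-e₁} + ∫ R^{α-e₀+e₂}_{β-e₂})
  − ∫ R^{α-e₀+e₁+e₂}_β`. -/
theorem integral_rec_six_term (α₀ α₁ α₂ β₀ β₁ β₂ : ℕ)
    (hβ₀ : β₀ = 0) (hβ₁ : 1 ≤ β₁) (hβ₂ : 1 ≤ β₂) (hα₀ : 1 ≤ α₀)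
    (hmax : max (α₀ + β₀) (max (α₁ + β₁) (α₂ + β₂)) ≤ α₀ + α₁ + α₂ + 1) :
    IntegrableOn (ratR α₀ α₁ α₂ β₀ β₁ β₂) stdTri ∧
    IntegrableOn (ratR α₀ α₁ α₂ β₀ (β₁ - 1) β₂) stdTri ∧
    IntegrableOn (ratR α₀ α₁ α₂ β₀ β₁ (β₂ - 1)) stdTri ∧
    IntegrableOn (ratR (α₀ - 1) (α₁ + 1) α₂ β₀ (β₁ - 1) β₂) stdTri ∧
    IntegrableOn (ratR (α₀ - 1) α₁ (α₂ + 1) β₀ β₁ (β₂ - 1)) stdTri ∧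
    IntegrableOn (ratR (α₀ - 1) (α₁ + 1) (α₂ + 1) β₀ β₁ β₂) stdTri ∧
    (∫ q in stdTri, ratR α₀ α₁ α₂ β₀ β₁ β₂ q) =
      (1 / 2) * ((∫ q in stdTri, ratR α₀ α₁ α₂ β₀ (β₁ - 1) β₂ q) +
          (∫ q in stdTri, ratR α₀ α₁ α₂ β₀ β₁ (β₂ - 1) q) +
          (∫ q in stdTri, ratR (α₀ - 1) (α₁ + 1) α₂ β₀ (β₁ - 1) β₂ q) +
          (∫ q in stdTri, ratR (α₀ - 1) α₁ (α₂ + 1) β₀ β₁ (β₂ - 1) q)) -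
        (∫ q in stdTri, ratR (α₀ - 1) (α₁ + 1) (α₂ + 1) β₀ β₁ β₂ q) := by
  subst hβ₀
  obtain ⟨c, rfl⟩ : ∃ c, β₁ = c + 1 := ⟨β₁ - 1, by omega⟩
  obtain ⟨d, rfl⟩ : ∃ d, β₂ = d + 1 := ⟨β₂ - 1, by omega⟩
  obtain ⟨e, rfl⟩ : ∃ e, α₀ = e + 1 := ⟨α₀ - 1, by omega⟩
  simp only [Nat.add_sub_cancel]
  have I₁ : IntegrableOn (ratR (e + 1) α₁ α₂ 0 (c + 1) (d + 1)) stdTri :=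
    integrableOn_ratR (by omega) (by omega)
  have I₂ : IntegrableOn (ratR (e + 1) α₁ α₂ 0 c (d + 1)) stdTri :=
    integrableOn_ratR (by omega) (by omega)
  have I₃ : IntegrableOn (ratR (e + 1) α₁ α₂ 0 (c + 1) d) stdTri :=
    integrableOn_ratR (by omega) (by omega)
  have I₄ : IntegrableOn (ratR e (α₁ + 1) α₂ 0 c (d + 1)) stdTri :=
    integrableOn_ratR (by omega) (by omega)
  have I₅ : IntegrableOn (ratR e α₁ (α₂ + 1) 0 (c + 1) d) stdTri :=
    integrableOn_ratR (by omega) (by omega)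
  have I₆ : IntegrableOn (ratR e (α₁ + 1) (α₂ + 1) 0 (c + 1) (d + 1)) stdTri :=
    integrableOn_ratR (by omega) (by omega)
  refine ⟨I₁, I₂, I₃, I₄, I₅, I₆, ?_⟩
  have key := setIntegral_congr_ae measurableSet_stdTri <|
    ae_fst_ne_one_and_snd_ne_one.mono fun q ⟨hx₁, hy₁⟩ _ =>
      ratR_six_term_identity e α₁ α₂ c d hx₁ hy₁
  rw [integral_add (I₁.const_mul 2) (I₆.const_mul 2), integral_const_mul, integral_const_mul,
    integral_add (by exact (I₂.add I₃).add I₄) I₅, integral_add (by exact I₂.add I₃) I₄,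
    integral_add I₂ I₃] at key
  linarith
end

section
/- For all α₁, α₂ ∈ ℕ, the function (x,y) ↦ x^{α₁} y^{α₂} / ((1-x)(1-y)) is Lebesgue integrable on the standard triangle T and ∫_T x^{α₁} y^{α₂} / ((1-x)(1-y)) d(x,y) = −∑_{i=1}^{α₂} 1/i² + π²/6 − ∑_{j=1}^{α₁} (1/j) · (α₂! (j−1)!)/(α₂+j)!. -/
/-!
The integrand is nonnegative on `T`, so Tonelli turns every integral over `T` into an iterated
one. Writing `x ^ (a + 1) = x ^ a - x ^ a (1 - x)` lowers `α₁` at the cost of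
`∫_T x^a y^b / (1 - y) = a! b! / ((a + 1) (a + b + 1)!)`, a Beta integral after integrating over the
`x`-slices. For `α₁ = 0`, expanding `1 / (1 - y) = ∑ y ^ n` gives
`∑ₙ ∫_T y^(b+n) / (1 - x) = ∑ₙ 1 / (b + n + 1)²`, a tail of `ζ(2) = π² / 6`.
-/

open MeasureTheory Set Real
open scoped ENNReal Nat

section Nonneg

variable {α : Type*} [MeasurableSpace α] {μ : Measure α}

lemma integrable_and_integral_eq_of_lintegral_ofReal_eq {f : α → ℝ} {c : ℝ}
    (hf : AEStronglyMeasurable f μ) (hf0 : 0 ≤ᵐ[μ] f) (hc : 0 ≤ c)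
    (h : ∫⁻ a, ENNReal.ofReal (f a) ∂μ = ENNReal.ofReal c) :
    Integrable f μ ∧ ∫ a, f a ∂μ = c := by
  refine ⟨(lintegral_ofReal_ne_top_iff_integrable hf hf0).1 (h ▸ ENNReal.ofReal_ne_top), ?_⟩
  rw [integral_eq_lintegral_of_nonneg_ae hf0 hf, h, ENNReal.toReal_ofReal hc]

lemma integrable_and_integral_eq_of_hasSum {f : ℕ → α → ℝ} {g : α → ℝ} {c : ℝ}
    (hg : AEStronglyMeasurable g μ) (hf : ∀ n, Integrable (f n) μ) (hf0 : ∀ n, 0 ≤ᵐ[μ] f n)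
    (hfg : ∀ᵐ a ∂μ, HasSum (fun n ↦ f n a) (g a)) (hc : HasSum (fun n ↦ ∫ a, f n a ∂μ) c) :
    Integrable g μ ∧ ∫ a, g a ∂μ = c := by
  have hf0' : ∀ᵐ a ∂μ, ∀ n, 0 ≤ f n a := ae_all_iff.2 hf0
  have hg0 : 0 ≤ᵐ[μ] g := by
    filter_upwards [hf0', hfg] with a h0 hs using hs.nonneg h0
  have hint0 (n : ℕ) : 0 ≤ ∫ a, f n a ∂μ := integral_nonneg_of_ae (hf0 n)
  refine integrable_and_integral_eq_of_lintegral_ofReal_eq hg hg0 (hc.nonneg hint0) ?_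
  calc ∫⁻ a, ENNReal.ofReal (g a) ∂μ = ∫⁻ a, ∑' n, ENNReal.ofReal (f n a) ∂μ := by
        refine lintegral_congr_ae ?_
        filter_upwards [hf0', hfg] with a h0 hs
        rw [← hs.tsum_eq, ENNReal.ofReal_tsum_of_nonneg h0 hs.summable]
    _ = ∑' n, ∫⁻ a, ENNReal.ofReal (f n a) ∂μ :=
        lintegral_tsum fun n ↦ (hf n).aemeasurable.ennreal_ofReal
    _ = ∑' n, ENNReal.ofReal (∫ a, f n a ∂μ) := by
        simp_rw [ofReal_integral_eq_lintegral_ofReal (hf _) (hf0 _)]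
    _ = ENNReal.ofReal c := by
        rw [← ENNReal.ofReal_tsum_of_nonneg hint0 hc.summable, hc.tsum_eq]

end Nonneg

def stdTriangle : Set (ℝ × ℝ) := {q | 0 ≤ q.1 ∧ 0 ≤ q.2 ∧ q.1 + q.2 ≤ 1}

lemma measurableSet_stdTriangle : MeasurableSet stdTriangle := by
  unfold stdTriangle; measurability

lemma mk_mem_stdTriangle {x y : ℝ} :
    (x, y) ∈ stdTriangle ↔ x ∈ Icc 0 1 ∧ y ∈ Icc 0 (1 - x) := by
  simp only [stdTriangle, mem_ofPred_eq, mem_Icc]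
  exact ⟨fun ⟨hx, hy, hxy⟩ ↦ ⟨⟨hx, by linarith⟩, hy, by linarith⟩,
    fun ⟨⟨hx, _⟩, hy, hxy⟩ ↦ ⟨hx, hy, by linarith⟩⟩

lemma stdTriangle_subset_unitSquare : stdTriangle ⊆ Icc 0 1 ×ˢ Icc 0 1 := fun q hq ↦ by
  obtain ⟨hx, hy, hxy⟩ := hq
  exact ⟨⟨hx, by linarith⟩, hy, by linarith⟩

lemma preimage_swap_stdTriangle : Prod.swap ⁻¹' stdTriangle = stdTriangle := by
  ext ⟨x, y⟩
  simp only [stdTriangle, mem_preimage, Prod.swap_prod_mk, mem_ofPred_eq, add_comm y x]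
  tauto

lemma lintegral_stdTriangle {f : ℝ × ℝ → ℝ≥0∞} (hf : Measurable f) :
    ∫⁻ q in stdTriangle, f q = ∫⁻ x in Ioc 0 1, ∫⁻ y in Ioc 0 (1 - x), f (x, y) := by
  have slice (x : ℝ) : ∫⁻ y, stdTriangle.indicator f (x, y) =
      (Icc 0 1).indicator (fun x ↦ ∫⁻ y in Ioc 0 (1 - x), f (x, y)) x := by
    by_cases hx : x ∈ Icc 0 1
    · have : (fun y ↦ stdTriangle.indicator f (x, y)) = (Icc 0 (1 - x)).indicator (f ⟨x, ·⟩) := by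
        ext y; by_cases hy : y ∈ Icc 0 (1 - x) <;> simp [hy, hx, mk_mem_stdTriangle]
      rw [indicator_of_mem hx, this, lintegral_indicator measurableSet_Icc]
      exact setLIntegral_congr Ioc_ae_eq_Icc.symm
    · simp [mk_mem_stdTriangle, hx]
  rw [← lintegral_indicator measurableSet_stdTriangle, Measure.volume_eq_prod,
    lintegral_prod _ (hf.indicator measurableSet_stdTriangle).aemeasurable]
  simp_rw [slice, lintegral_indicator measurableSet_Icc]
  exact setLIntegral_congr Ioc_ae_eq_Icc.symm

lemma integrableOn_and_setIntegral_stdTriangle_eq_iterated {f : ℝ × ℝ → ℝ} (hf : Measurable f)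
    (hf0 : ∀ q ∈ stdTriangle, 0 ≤ f q)
    (hslice : ∀ᵐ x ∂volume.restrict (Ioc 0 1),
      IntervalIntegrable (fun y ↦ f (x, y)) volume 0 (1 - x))
    (hF : IntervalIntegrable (fun x ↦ ∫ y in 0..1 - x, f (x, y)) volume 0 1) :
    IntegrableOn f stdTriangle ∧
      ∫ q in stdTriangle, f q = ∫ x in 0..1, ∫ y in 0..1 - x, f (x, y) := by
  have hF0 (x : ℝ) (hx : x ∈ Icc 0 1) : 0 ≤ ∫ y in 0..1 - x, f (x, y) :=
    intervalIntegral.integral_nonneg (by linarith [hx.2])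
      fun y hy ↦ hf0 _ (mk_mem_stdTriangle.2 ⟨hx, hy⟩)
  refine integrable_and_integral_eq_of_lintegral_ofReal_eq hf.aestronglyMeasurable
    (ae_restrict_of_forall_mem measurableSet_stdTriangle hf0)
    (intervalIntegral.integral_nonneg zero_le_one hF0) ?_
  rw [lintegral_stdTriangle hf.ennreal_ofReal, intervalIntegral.integral_of_le zero_le_one,
    ofReal_integral_eq_lintegral_ofReal
      ((intervalIntegrable_iff_integrableOn_Ioc_of_le zero_le_one).1 hF)
      (ae_restrict_of_forall_mem measurableSet_Ioc fun x hx ↦ hF0 x (Ioc_subset_Icc_self hx))]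
  refine lintegral_congr_ae ?_
  filter_upwards [hslice, ae_restrict_mem measurableSet_Ioc] with x hx hmem
  have h1x : 0 ≤ 1 - x := by linarith [hmem.2]
  rw [intervalIntegral.integral_of_le h1x, ofReal_integral_eq_lintegral_ofReal
    ((intervalIntegrable_iff_integrableOn_Ioc_of_le h1x).1 hx)]
  exact ae_restrict_of_forall_mem measurableSet_Ioc fun y hy ↦
    hf0 _ (mk_mem_stdTriangle.2 ⟨Ioc_subset_Icc_self hmem, Ioc_subset_Icc_self hy⟩)

lemma measurePreserving_swap_volume : MeasurePreserving (Prod.swap : ℝ × ℝ → ℝ × ℝ) :=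
  Measure.measurePreserving_swap

lemma integrableOn_stdTriangle_comp_swap_iff {f : ℝ × ℝ → ℝ} :
    IntegrableOn (f ∘ Prod.swap) stdTriangle ↔ IntegrableOn f stdTriangle := by
  have := measurePreserving_swap_volume.integrableOn_comp_preimage
    MeasurableEquiv.prodComm.measurableEmbedding (f := f) (s := stdTriangle)
  rwa [preimage_swap_stdTriangle] at this

lemma setIntegral_stdTriangle_comp_swap (f : ℝ × ℝ → ℝ) :
    ∫ q in stdTriangle, (f ∘ Prod.swap) q = ∫ q in stdTriangle, f q := by
  conv_lhs => rw [← preimage_swap_stdTriangle]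
  exact measurePreserving_swap_volume.setIntegral_preimage_emb
    MeasurableEquiv.prodComm.measurableEmbedding f _

lemma integral_pow_mul_one_sub_pow (a b : ℕ) :
    ∫ x in 0..1, x ^ a * (1 - x) ^ b = (a ! * b ! / (a + b + 1)! : ℝ) := by
  have hbeta : Complex.betaIntegral (a + 1) (b + 1) = ∫ x in 0..1, x ^ a * (1 - x) ^ b := by
    rw [Complex.betaIntegral, ← intervalIntegral.integral_ofReal]
    refine intervalIntegral.integral_congr fun x _ ↦ ?_
    simp only [add_sub_cancel_right, Complex.cpow_natCast]
    push_cast; rfl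
  have hΓ (n : ℕ) : Complex.Gamma (n + 1) = n ! := by
    exact_mod_cast Complex.Gamma_nat_eq_factorial n
  rw [Complex.betaIntegral_eq_Gamma_mul_div _ _ (by simp; positivity) (by simp; positivity),
    show (a + 1 + (b + 1) : ℂ) = ((a + b + 1 : ℕ) : ℂ) + 1 by push_cast; ring,
    hΓ, hΓ, hΓ] at hbeta
  apply Complex.ofReal_injective
  rw [← hbeta]
  push_cast; rfl

lemma hasSum_one_div_nat_add_sq (b : ℕ) :
    HasSum (fun n : ℕ ↦ 1 / ((n + (b + 1) : ℕ) : ℝ) ^ 2)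
      (π ^ 2 / 6 - ∑ i ∈ Finset.Icc 1 b, 1 / (i : ℝ) ^ 2) := by
  have h := (hasSum_nat_add_iff' (b + 1)).2 hasSum_zeta_two
  rwa [Finset.sum_range_succ', Finset.range_eq_Ico,
    Finset.sum_Ico_add' (fun i : ℕ ↦ 1 / (i : ℝ) ^ 2) 0 b 1, Finset.Ico_add_one_right_eq_Icc,
    zero_add, Nat.cast_zero, zero_pow two_ne_zero, div_zero, add_zero] at h

lemma integrableOn_and_setIntegral_stdTriangle_div_one_sub_fst (a b : ℕ) :
    IntegrableOn (fun q : ℝ × ℝ ↦ q.1 ^ a * q.2 ^ b / (1 - q.1)) stdTriangle ∧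
      ∫ q in stdTriangle, q.1 ^ a * q.2 ^ b / (1 - q.1) =
        (a ! * b ! / ((b + 1) * (a + b + 1)!) : ℝ) := by
  have inner (x : ℝ) : ∫ y in 0..1 - x, x ^ a * y ^ b / (1 - x) =
      x ^ a / (1 - x) * ((1 - x) ^ (b + 1) / (b + 1)) := by
    simp [integral_pow, mul_div_right_comm]
  have outer : EqOn (fun x : ℝ ↦ x ^ a / (1 - x) * ((1 - x) ^ (b + 1) / (b + 1)))
      (fun x ↦ x ^ a * (1 - x) ^ b / (b + 1)) (uIoo 0 1) := by
    intro x hx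
    rw [uIoo_of_le zero_le_one] at hx
    have : 1 - x ≠ 0 := by linarith [hx.2]
    field_simp
    ring
  obtain ⟨hint, hval⟩ := integrableOn_and_setIntegral_stdTriangle_eq_iterated
    (f := fun q : ℝ × ℝ ↦ q.1 ^ a * q.2 ^ b / (1 - q.1)) (by fun_prop)
    (fun q hq ↦ by
      obtain ⟨⟨hx0, hx1⟩, hy0, -⟩ := stdTriangle_subset_unitSquare hq
      exact div_nonneg (by positivity) (sub_nonneg.2 hx1))
    (ae_of_all _ fun x ↦
      (by fun_prop : Continuous fun y : ℝ ↦ x ^ a * y ^ b / (1 - x)).intervalIntegrable _ _)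
    (by
      simp_rw [inner]
      exact ((by fun_prop : Continuous _).intervalIntegrable _ _).congr_uIoo outer.symm)
  refine ⟨hint, ?_⟩
  simp_rw [hval, inner]
  rw [intervalIntegral.integral_congr_uIoo outer, intervalIntegral.integral_div,
    integral_pow_mul_one_sub_pow]
  field_simp

lemma integrableOn_and_setIntegral_stdTriangle_div_one_sub_snd (a b : ℕ) :
    IntegrableOn (fun q : ℝ × ℝ ↦ q.1 ^ a * q.2 ^ b / (1 - q.2)) stdTriangle ∧
      ∫ q in stdTriangle, q.1 ^ a * q.2 ^ b / (1 - q.2) =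
        (a ! * b ! / ((a + 1) * (a + b + 1)!) : ℝ) := by
  obtain ⟨hint, hval⟩ := integrableOn_and_setIntegral_stdTriangle_div_one_sub_fst b a
  have hswap : (fun q : ℝ × ℝ ↦ q.1 ^ a * q.2 ^ b / (1 - q.2)) =
      (fun q : ℝ × ℝ ↦ q.1 ^ b * q.2 ^ a / (1 - q.1)) ∘ Prod.swap := by
    ext q; simp [mul_comm]
  rw [hswap, integrableOn_stdTriangle_comp_swap_iff, setIntegral_stdTriangle_comp_swap, hval,
    add_comm a b, mul_comm (a ! : ℝ)]
  exact ⟨hint, rfl⟩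

lemma integrableOn_and_setIntegral_stdTriangle_pow_div_one_sub_mul_one_sub (b : ℕ) :
    IntegrableOn (fun q : ℝ × ℝ ↦ q.2 ^ b / ((1 - q.1) * (1 - q.2))) stdTriangle ∧
      ∫ q in stdTriangle, q.2 ^ b / ((1 - q.1) * (1 - q.2)) =
        π ^ 2 / 6 - ∑ i ∈ Finset.Icc 1 b, 1 / (i : ℝ) ^ 2 := by
  have hterm (n : ℕ) := integrableOn_and_setIntegral_stdTriangle_div_one_sub_fst 0 (n + b)
  refine integrable_and_integral_eq_of_hasSum
    (f := fun n (q : ℝ × ℝ) ↦ q.1 ^ 0 * q.2 ^ (n + b) / (1 - q.1))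
    (Measurable.aestronglyMeasurable (by fun_prop)) (fun n ↦ (hterm n).1) (fun n ↦ ?_) ?_ ?_
  · refine ae_restrict_of_forall_mem measurableSet_stdTriangle fun q hq ↦ ?_
    obtain ⟨⟨hx0, hx1⟩, hy0, -⟩ := stdTriangle_subset_unitSquare hq
    exact div_nonneg (by positivity) (sub_nonneg.2 hx1)
  · filter_upwards [ae_restrict_mem measurableSet_stdTriangle,
      ae_restrict_of_ae (Measure.quasiMeasurePreserving_snd.ae (Measure.ae_ne volume 1))]
      with q hq hq1
    obtain ⟨-, hy0, hy1⟩ := stdTriangle_subset_unitSquare hq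
    rw [div_mul_eq_div_div, div_eq_mul_inv (q.2 ^ b / (1 - q.1))]
    refine ((hasSum_geometric_of_lt_one hy0 (hy1.lt_of_ne hq1)).mul_left
      (q.2 ^ b / (1 - q.1))).congr_fun fun n ↦ ?_
    rw [pow_zero, one_mul, pow_add]
    ring
  · convert hasSum_one_div_nat_add_sq b using 1
    ext n
    rw [(hterm n).2, zero_add, Nat.factorial_zero, Nat.factorial_succ]
    push_cast
    field_simp
    ring

/-- Off the null lines `q.1 = 1` and `q.2 = 1`; on them the divisions by zero return `0` and the
identity fails. -/
lemma fst_pow_succ_mul_div_ae_eq (a b : ℕ) :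
    (fun q : ℝ × ℝ ↦ q.1 ^ (a + 1) * q.2 ^ b / ((1 - q.1) * (1 - q.2)))
      =ᵐ[volume.restrict stdTriangle]
      fun q ↦ q.1 ^ a * q.2 ^ b / ((1 - q.1) * (1 - q.2)) - q.1 ^ a * q.2 ^ b / (1 - q.2) := by
  filter_upwards
    [ae_restrict_of_ae (Measure.quasiMeasurePreserving_fst.ae (Measure.ae_ne volume 1)),
    ae_restrict_of_ae (Measure.quasiMeasurePreserving_snd.ae (Measure.ae_ne volume 1))]
    with q hx hy
  have : 1 - q.1 ≠ 0 := sub_ne_zero.2 hx.symm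
  have : 1 - q.2 ≠ 0 := sub_ne_zero.2 hy.symm
  field_simp
  ring

/-- `(x,y) ↦ x^{α₁} y^{α₂}/((1-x)(1-y))` is integrable on the standard triangle and
`∫_T x^{α₁} y^{α₂}/((1-x)(1-y)) = −∑_{i=1}^{α₂} 1/i² + π²/6 − ∑_{j=1}^{α₁} (1/j)·α₂!(j−1)!/(α₂+j)!`. -/
theorem triangle_integral_both_singular (α₁ α₂ : ℕ) :
    IntegrableOn (fun q : ℝ × ℝ => q.1 ^ α₁ * q.2 ^ α₂ / ((1 - q.1) * (1 - q.2)))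
        {q : ℝ × ℝ | 0 ≤ q.1 ∧ 0 ≤ q.2 ∧ q.1 + q.2 ≤ 1} ∧
      (∫ q in {q : ℝ × ℝ | 0 ≤ q.1 ∧ 0 ≤ q.2 ∧ q.1 + q.2 ≤ 1},
          q.1 ^ α₁ * q.2 ^ α₂ / ((1 - q.1) * (1 - q.2))) =
        -(∑ i ∈ Finset.Icc 1 α₂, 1 / (i : ℝ) ^ 2) + Real.pi ^ 2 / 6 -
          ∑ j ∈ Finset.Icc 1 α₁,
            (1 / (j : ℝ)) *
              ((α₂.factorial * (j - 1).factorial : ℕ) : ℝ) / (((α₂ + j).factorial : ℕ) : ℝ) := by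
  change IntegrableOn _ stdTriangle ∧ ∫ q in stdTriangle, _ = _
  induction α₁ with
  | zero =>
    obtain ⟨hint, hval⟩ := integrableOn_and_setIntegral_stdTriangle_pow_div_one_sub_mul_one_sub α₂
    simp only [pow_zero, one_mul, hval]
    exact ⟨hint, by simp; ring⟩
  | succ a ih =>
    obtain ⟨hB, hBval⟩ := integrableOn_and_setIntegral_stdTriangle_div_one_sub_snd a α₂
    have hae := fst_pow_succ_mul_div_ae_eq a α₂
    refine ⟨(ih.1.sub hB).congr hae.symm, ?_⟩
    rw [integral_congr_ae hae, integral_sub ih.1 hB, ih.2, hBval,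
      Finset.sum_Icc_succ_top (by omega), Nat.add_sub_cancel,
      show α₂ + (a + 1) = a + α₂ + 1 by omega]
    push_cast
    field_simp
    ring
end
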